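/- For all natural numbers M ≥ 1 and all j with 0 ≤ j ≤ M−1, the identity ∑_{k=0}^{j} (-1)^{j-k} 2^{4k+2} ((M−k)/(2k+1)) (C(2(M−1−k), j−k) − C(2(M−1−k), j−1−k)) C(M+k, 2k) = C(4M, 2j+1) holds over the rationals. -/

import Mathlib

/-!
Put `a = (1 + x)²` and `b = (1 - x)²`, so that `a² - b² = 8x(1 + x²)`, `ab = (1 - x²)²` and
`(a - b)² = 16x²`. The classical expansion
`a^(2M) - b^(2M) = (a² - b²) ∑ₖ C(M+k, 2k+1) (a - b)^(2k) (ab)^(M-1-k)`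
(proved by induction together with its companion for `a^(2n+1) + b^(2n+1)`) then writes
`(1 + x)^(4M) - (1 - x)^(4M)` as `8 ∑ₖ 16^k C(M+k, 2k+1) x^(2k+1) (1 + x²)(1 - x²)^(2(M-1-k))`.
Comparing coefficients of `x^(2j+1)` gives the identity, because
`(M - k)/(2k + 1) · C(M+k, 2k) = C(M+k, 2k+1)`.
-/

open Finset Polynomial

section FibonacciSums

variable {R : Type*}

section Semiring

variable [CommSemiring R]

/- With `t² = s`, `fibEven p s n` and `t * fibOdd p s n` are the bivariate Fibonacci polynomials
`F_(2n+1)(t, p)` and `F_(2n+2)(t, p)`, where `F_(m+2) = t F_(m+1) + p F_m`. -/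
def fibEven (p s : R) (n : ℕ) : R :=
  ∑ x ∈ antidiagonal n, ((2 * x.1 + x.2).choose (2 * x.1) : R) * s ^ x.1 * p ^ x.2

def fibOdd (p s : R) (n : ℕ) : R :=
  ∑ x ∈ antidiagonal n, ((2 * x.1 + x.2 + 1).choose (2 * x.1 + 1) : R) * s ^ x.1 * p ^ x.2

theorem fibOdd_succ (p s : R) (n : ℕ) :
    fibOdd p s (n + 1) = fibEven p s (n + 1) + p * fibOdd p s n := by
  calc fibOdd p s (n + 1)
      = fibEven p s (n + 1) + ∑ x ∈ antidiagonal (n + 1),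
          ((2 * x.1 + x.2).choose (2 * x.1 + 1) : R) * s ^ x.1 * p ^ x.2 := by
        rw [fibOdd, fibEven, ← sum_add_distrib]
        refine sum_congr rfl fun x _ => ?_
        rw [Nat.choose_succ_succ']
        push_cast
        ring
    _ = fibEven p s (n + 1) + p * fibOdd p s n := by
        rw [Nat.sum_antidiagonal_succ', Nat.choose_eq_zero_of_lt (by omega), fibOdd, mul_sum]
        simp only [Nat.cast_zero, zero_mul, zero_add, pow_succ]
        congr 1
        refine sum_congr rfl fun x _ => ?_
        ring_nf

theorem fibEven_succ (p s : R) (n : ℕ) :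
    fibEven p s (n + 1) = p * fibEven p s n + s * fibOdd p s n := by
  have boundary : p ^ (n + 1) + ∑ x ∈ antidiagonal n,
      ((2 * x.1 + x.2 + 1).choose (2 * x.1 + 2) : R) * s ^ (x.1 + 1) * p ^ x.2 =
      p * fibEven p s n := by
    cases n with
    | zero => simp [fibEven]
    | succ m =>
      rw [Nat.sum_antidiagonal_succ', fibEven, Nat.sum_antidiagonal_succ]
      dsimp only
      rw [Nat.choose_eq_zero_of_lt (by omega), Nat.cast_zero, zero_mul, zero_mul, zero_add,
        mul_add, mul_sum]
      congr 1
      · simp [pow_succ, mul_comm]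
      refine sum_congr rfl fun x _ => ?_
      ring_nf
  calc fibEven p s (n + 1)
      = p ^ (n + 1) + ∑ x ∈ antidiagonal n,
          ((2 * x.1 + x.2 + 2).choose (2 * x.1 + 2) : R) * s ^ (x.1 + 1) * p ^ x.2 := by
        rw [fibEven, Nat.sum_antidiagonal_succ]
        simp only [mul_zero, zero_add, Nat.choose_zero_right, Nat.cast_one, pow_zero, one_mul]
        congr 1
        refine sum_congr rfl fun x _ => ?_
        ring_nf
    _ = (p ^ (n + 1) + ∑ x ∈ antidiagonal n,
          ((2 * x.1 + x.2 + 1).choose (2 * x.1 + 2) : R) * s ^ (x.1 + 1) * p ^ x.2)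
          + s * fibOdd p s n := by
        rw [fibOdd, mul_sum, add_assoc, ← sum_add_distrib]
        congr 1
        refine sum_congr rfl fun x _ => ?_
        rw [Nat.choose_succ_succ']
        push_cast
        ring
    _ = p * fibEven p s n + s * fibOdd p s n := by rw [boundary]

end Semiring

variable [CommRing R]

theorem add_mul_fibEven_and_sq_sub_sq_mul_fibOdd (a b : R) (n : ℕ) :
    (a + b) * fibEven (a * b) ((a - b) ^ 2) n = a ^ (2 * n + 1) + b ^ (2 * n + 1) ∧
      (a ^ 2 - b ^ 2) * fibOdd (a * b) ((a - b) ^ 2) n = a ^ (2 * n + 2) - b ^ (2 * n + 2) := by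
  induction n with
  | zero => simp [fibEven, fibOdd]
  | succ n ih =>
    obtain ⟨hE, hO⟩ := ih
    have hE' : (a + b) * fibEven (a * b) ((a - b) ^ 2) (n + 1) =
        a ^ (2 * (n + 1) + 1) + b ^ (2 * (n + 1) + 1) := by
      rw [fibEven_succ]
      linear_combination (a * b) * hE + (a - b) * hO
    refine ⟨hE', ?_⟩
    rw [fibOdd_succ]
    linear_combination (a - b) * hE' + (a * b) * hO

theorem sq_sub_sq_mul_fibOdd (a b : R) (n : ℕ) :
    (a ^ 2 - b ^ 2) * fibOdd (a * b) ((a - b) ^ 2) n = a ^ (2 * n + 2) - b ^ (2 * n + 2) :=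
  (add_mul_fibEven_and_sq_sub_sq_mul_fibOdd a b n).2

end FibonacciSums

theorem Nat.cast_choose_succ_right {K : Type*} [Field K] [CharZero K] (n k : ℕ) :
    (n.choose (k + 1) : K) = ((n : K) - k) / (k + 1) * n.choose k := by
  rcases le_or_gt k n with hkn | hnk
  · have h := congrArg (Nat.cast : ℕ → K) (Nat.choose_succ_right_eq n k)
    push_cast [hkn] at h
    field_simp
    linear_combination h
  · simp [Nat.choose_eq_zero_of_lt hnk, Nat.choose_eq_zero_of_lt (hnk.trans (Nat.lt_succ_self k))]

section Coefficients

variable {R : Type*} [CommRing R]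

theorem coeff_one_sub_X_pow (N r : ℕ) :
    ((1 - X : R[X]) ^ N).coeff r = (-1) ^ r * N.choose r := by
  have : (1 - X : R[X]) ^ N = ∑ m ∈ range (N + 1), C ((-1) ^ m * (N.choose m : R)) * X ^ m := by
    rw [sub_eq_neg_add, add_pow]
    refine sum_congr rfl fun m _ => ?_
    simp only [one_pow, mul_one, neg_pow (X : R[X]), C_mul, C_pow, C_neg, C_1, ← C_eq_natCast]
    ring
  rw [this, finsetSum_coeff]
  simp only [coeff_C_mul_X_pow, sum_ite_eq, mem_range]
  split_ifs with h
  · rfl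
  · rw [Nat.choose_eq_zero_of_lt (by omega), Nat.cast_zero, mul_zero]

theorem coeff_one_add_X_sq_mul_one_sub_X_sq_pow (N r : ℕ) :
    ((1 + X ^ 2) * (1 - X ^ 2 : R[X]) ^ N).coeff (2 * r) =
      (-1) ^ r * (N.choose r - if 1 ≤ r then N.choose (r - 1) else 0 : R) := by
  have : (1 + X ^ 2) * (1 - X ^ 2 : R[X]) ^ N = expand R 2 ((1 + X ^ 1) * (1 - X) ^ N) := by
    simp
  rw [this, coeff_expand_mul' two_pos, add_mul, one_mul, coeff_add,
    coeff_X_pow_mul', coeff_one_sub_X_pow]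
  split_ifs with hr
  · obtain ⟨r, rfl⟩ : ∃ r', r = r' + 1 := ⟨r - 1, by omega⟩
    simp only [coeff_one_sub_X_pow, add_tsub_cancel_right, pow_succ]
    ring
  · ring

theorem coeff_one_add_X_pow_sub_one_sub_X_pow_odd (m j : ℕ) :
    ((1 + X) ^ m - (1 - X : R[X]) ^ m).coeff (2 * j + 1) = 2 * (m.choose (2 * j + 1) : R) := by
  rw [coeff_sub, coeff_one_add_X_pow, coeff_one_sub_X_pow, Odd.neg_one_pow ⟨j, rfl⟩]
  ring

theorem coeff_X_pow_mul_one_add_X_sq_mul_one_sub_X_sq_pow (N k j : ℕ) :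
    (X ^ (2 * k + 1) * ((1 + X ^ 2) * (1 - X ^ 2 : R[X]) ^ N)).coeff (2 * j + 1) =
      if k ≤ j then
        (-1) ^ (j - k) * (N.choose (j - k) - if k + 1 ≤ j then N.choose (j - 1 - k) else 0 : R)
      else 0 := by
  rw [coeff_X_pow_mul']
  by_cases hkj : k ≤ j
  · rw [if_pos (by omega), if_pos hkj, show 2 * j + 1 - (2 * k + 1) = 2 * (j - k) by omega,
      coeff_one_add_X_sq_mul_one_sub_X_sq_pow, show j - k - 1 = j - 1 - k by omega]
    simp only [show 1 ≤ j - k ↔ k + 1 ≤ j by omega]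
  · rw [if_neg (by omega), if_neg hkj]

theorem one_add_X_pow_sub_one_sub_X_pow_eq_sum (n : ℕ) :
    (1 + X) ^ (4 * (n + 1)) - (1 - X : R[X]) ^ (4 * (n + 1)) =
      ∑ k ∈ range (n + 1), C (8 * 16 ^ k * ((n + 1 + k).choose (2 * k + 1) : R)) *
        (X ^ (2 * k + 1) * ((1 + X ^ 2) * (1 - X ^ 2) ^ (2 * (n - k)))) := by
  have h := sq_sub_sq_mul_fibOdd ((1 + X : R[X]) ^ 2) ((1 - X) ^ 2) n
  simp only [← pow_mul, show 2 * (2 * n + 2) = 4 * (n + 1) by ring] at h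
  rw [← h, fibOdd, Nat.sum_antidiagonal_eq_sum_range_succ_mk, mul_sum]
  refine sum_congr rfl fun k hk => ?_
  rw [show 2 * k + (n - k) + 1 = n + 1 + k by grind]
  simp only [map_mul, map_pow, map_ofNat, C_eq_natCast, pow_mul]
  ring

end Coefficients

theorem stmt_3 (M j : ℕ) (hM : 1 ≤ M) (hj : j ≤ M - 1) :
    ∑ k ∈ Finset.range (j + 1),
      (-1 : ℚ) ^ (j - k) * 2 ^ (4 * k + 2) * (((M : ℚ) - k) / (2 * k + 1)) *
        (((2 * (M - 1 - k)).choose (j - k) : ℚ) -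
          (if k + 1 ≤ j then ((2 * (M - 1 - k)).choose (j - 1 - k) : ℚ) else 0)) *
        ((M + k).choose (2 * k))
    = ((4 * M).choose (2 * j + 1) : ℚ) := by
  obtain ⟨n, rfl⟩ : ∃ n, M = n + 1 := ⟨M - 1, by omega⟩
  have hcoeff := congrArg (coeff · (2 * j + 1))
    (one_add_X_pow_sub_one_sub_X_pow_eq_sum (R := ℚ) n)
  simp only [coeff_one_add_X_pow_sub_one_sub_X_pow_odd, finsetSum_coeff, coeff_C_mul,
    coeff_X_pow_mul_one_add_X_sq_mul_one_sub_X_sq_pow, mul_ite, mul_zero] at hcoeff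
  rw [← sum_filter, show (range (n + 1)).filter (· ≤ j) = range (j + 1) by
    ext; simp only [mem_filter, mem_range]; omega] at hcoeff
  refine mul_left_cancel₀ (two_ne_zero (α := ℚ)) ?_
  rw [hcoeff, mul_sum, Nat.add_sub_cancel]
  refine sum_congr rfl fun k _ => ?_
  have h16 : (2 : ℚ) ^ (4 * k + 2) = 4 * 16 ^ k := by rw [pow_add, pow_mul]; norm_num; ring
  rw [Nat.cast_choose_succ_right, h16]
  push_cast
  ring
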